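/- Let V and W be closed subspaces of a Hilbert space F such that P_V - P_W is a compact operator. Then both dim(V ∩ W⊥) and dim(V⊥ ∩ W) are finite, so the relative dimension dim(V,W) = dim(V ∩ W⊥) - dim(V⊥ ∩ W) is a well-defined integer. -/

import Mathlib

/-!
On `V ⊓ Wᗮ` the projection `P_V` acts as the identity and `P_W` as zero, so the compact
operator `P_V - P_W` restricts to the identity of this closed subspace, and by Riesz's
theorem a space with compact identity is finite dimensional. Exchanging `V` and `W` replaces
`P_V - P_W` by its negative, which handles `Vᗮ ⊓ W`.
-/

theorem FiniteDimensional.of_isCompactOperator_of_forall_apply_eq_self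
    {𝕜 E : Type*} [NontriviallyNormedField 𝕜] [CompleteSpace 𝕜]
    [AddCommGroup E] [Module 𝕜 E] [TopologicalSpace E] [T2Space E] [IsTopologicalAddGroup E]
    [ContinuousSMul 𝕜 E] {T : E →ₗ[𝕜] E} (hT : IsCompactOperator T) {S : Submodule 𝕜 E}
    (hS : IsClosed (S : Set E)) (hTS : ∀ x ∈ S, T x = x) : FiniteDimensional 𝕜 S := by
  have hmaps : ∀ x ∈ S, T x ∈ S := fun x hx ↦ (hTS x hx).symm ▸ hx
  have hrestrict : ⇑(T.restrict hmaps) = id := funext fun x ↦ Subtype.ext (hTS x x.2)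
  exact .of_isCompactOperator_id (hrestrict ▸ hT.restrict hmaps hS)

namespace Submodule

variable {𝕜 E : Type*} [RCLike 𝕜] [NormedAddCommGroup E] [InnerProductSpace 𝕜 E]

theorem starProjection_sub_starProjection_apply_of_mem_inf_orthogonal
    {V W : Submodule 𝕜 E} [V.HasOrthogonalProjection] [W.HasOrthogonalProjection] {x : E}
    (hx : x ∈ V ⊓ Wᗮ) : (V.starProjection - W.starProjection) x = x := by
  rw [sub_apply, starProjection_eq_self_iff.mpr hx.1,
    (starProjection_apply_eq_zero_iff W).mpr hx.2, sub_zero]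

theorem finiteDimensional_inf_orthogonal_of_isCompactOperator
    (V W : Submodule 𝕜 E) [CompleteSpace V] [W.HasOrthogonalProjection]
    (h : IsCompactOperator (V.starProjection - W.starProjection)) :
    FiniteDimensional 𝕜 (V ⊓ Wᗮ : Submodule 𝕜 E) :=
  .of_isCompactOperator_of_forall_apply_eq_self
    (T := (V.starProjection - W.starProjection).toLinearMap) h
    ((completeSpace_coe_iff_isComplete.mp ‹_›).isClosed.inter W.isClosed_orthogonal)
    fun _ hx ↦ starProjection_sub_starProjection_apply_of_mem_inf_orthogonal hx

end Submodule

theorem stmt_1_general {F : Type*} [NormedAddCommGroup F] [InnerProductSpace ℝ F]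
    (V W : Submodule ℝ F) [CompleteSpace V] [CompleteSpace W]
    (h : IsCompactOperator
      ((V.subtypeL.comp (Submodule.orthogonalProjectionOnto V)) - (W.subtypeL.comp (Submodule.orthogonalProjectionOnto W)))) :
    FiniteDimensional ℝ (V ⊓ Wᗮ : Submodule ℝ F) ∧
    FiniteDimensional ℝ (Vᗮ ⊓ W : Submodule ℝ F) := by
  have h' : IsCompactOperator (W.starProjection - V.starProjection) := by
    rw [← neg_sub, FunLike.coe_neg]
    exact h.neg
  refine ⟨V.finiteDimensional_inf_orthogonal_of_isCompactOperator W h, ?_⟩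
  rw [inf_comm]
  exact W.finiteDimensional_inf_orthogonal_of_isCompactOperator V h'

/-- If `P_V - P_W` is compact, then `V ∩ W⊥` and `V⊥ ∩ W` are finite dimensional,
so the relative dimension `dim(V,W) = dim(V ∩ W⊥) - dim(V⊥ ∩ W)` is a well-defined integer. -/
theorem stmt_1 {F : Type*} [NormedAddCommGroup F] [InnerProductSpace ℝ F] [CompleteSpace F]
    (V W : Submodule ℝ F) [CompleteSpace V] [CompleteSpace W]
    (h : IsCompactOperator
      ((V.subtypeL.comp (Submodule.orthogonalProjectionOnto V)) - (W.subtypeL.comp (Submodule.orthogonalProjectionOnto W)))) :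
    FiniteDimensional ℝ (V ⊓ Wᗮ : Submodule ℝ F) ∧
    FiniteDimensional ℝ (Vᗮ ⊓ W : Submodule ℝ F) :=
  stmt_1_general V W h
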